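/- For M ≥ 2⁹, the annulus A = S¹ × [-2,2] is contained in the interior of W(A), where W = s ∘ σ with σ(x,y) = (x - 2πy, y) and s(x,y) = (x, My - (M-1)sin x). -/

import Mathlib

/-- The shear map σ(x,y) = (x - 2πy mod 2π, y). -/
noncomputable def shear : Real.Angle × ℝ → Real.Angle × ℝ :=
  fun p => (p.1 - ((2 * Real.pi * p.2 : ℝ) : Real.Angle), p.2)

/-- The map s(x,y) = (x, M y - (M-1) sin x). -/
noncomputable def smap (M : ℝ) : Real.Angle × ℝ → Real.Angle × ℝ :=
  fun p => (p.1, M * p.2 - (M - 1) * p.1.sin)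

/-- The annulus A = S¹ × [-2,2]. -/
def annulusA : Set (Real.Angle × ℝ) := Set.univ ×ˢ Set.Icc (-2 : ℝ) 2

/-!
Both maps are explicitly invertible: `(a, b)` is the image of `(a + 2πy, y)` with
`y = (b + (M - 1) sin a) / M`. For `|b| ≤ M + 1` this height satisfies `|y| ≤ 2`, so `W(A)`
contains the annulus `S¹ × [-(M+1), M+1]`, whose interior contains `A` as soon as `M > 1`.
-/

open Set

lemma Real.Angle.abs_sin_le_one (θ : Real.Angle) : |θ.sin| ≤ 1 := by
  induction θ using Real.Angle.induction_on
  rw [Real.Angle.sin_coe]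
  exact Real.abs_sin_le_one _

lemma smap_comp_shear_apply_lift {M : ℝ} (hM : M ≠ 0) (a : Real.Angle) (b : ℝ) :
    (smap M ∘ shear)
      (a + ((2 * Real.pi * ((b + (M - 1) * a.sin) / M) : ℝ) : Real.Angle),
        (b + (M - 1) * a.sin) / M) = (a, b) := by
  simp only [Function.comp_apply, shear, smap, add_sub_cancel_right, Prod.mk.injEq, true_and]
  field_simp
  ring

lemma surjOn_smap_comp_shear {M : ℝ} (hM : 1 ≤ M) :
    SurjOn (smap M ∘ shear) annulusA (univ ×ˢ Icc (-(M + 1)) (M + 1)) := by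
  rintro ⟨a, b⟩ ⟨-, hb⟩
  have hM0 : 0 < M := by linarith
  have hsin : |(M - 1) * a.sin| ≤ M - 1 := by
    rw [abs_mul, abs_of_nonneg (by linarith : 0 ≤ M - 1)]
    exact mul_le_of_le_one_right (by linarith) a.abs_sin_le_one
  have hheight : |(b + (M - 1) * a.sin) / M| ≤ 2 := by
    rw [abs_div, abs_of_pos hM0, div_le_iff₀ hM0]
    calc |b + (M - 1) * a.sin| ≤ |b| + |(M - 1) * a.sin| := abs_add_le _ _
      _ ≤ (M + 1) + (M - 1) := add_le_add (abs_le.mpr hb) hsin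
      _ = 2 * M := by ring
  exact ⟨_, ⟨mem_univ _, abs_le.mp hheight⟩, smap_comp_shear_apply_lift hM0.ne' a b⟩

/-- For M ≥ 2⁹, the annulus A is contained in the interior of W(A), W = s ∘ σ. -/
theorem annulus_subset_interior_Wmap_image (M : ℝ) (hM : M ≥ 2 ^ 9) :
    annulusA ⊆ interior ((smap M ∘ shear) '' annulusA) := by
  have hM1 : 1 < M := by linarith
  calc annulusA ⊆ univ ×ˢ Ioo (-(M + 1)) (M + 1) := by
        rintro p ⟨-, hp₁, hp₂⟩
        exact ⟨mem_univ _, by linarith, by linarith⟩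
    _ = interior (univ ×ˢ Icc (-(M + 1)) (M + 1)) := by
        rw [interior_prod_eq, interior_univ, interior_Icc]
    _ ⊆ interior ((smap M ∘ shear) '' annulusA) :=
        interior_mono (surjOn_smap_comp_shear hM1.le)
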